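/- Let φ : 𝔹_n → 𝔹_n be holomorphic with φ(0) = 0. Then sup{ ‖f∘φ‖_B : f Bloch on 𝔹_n, ‖f‖_B ≤ 1 } = 1; in particular, for every Bloch function f on 𝔹_n, f∘φ is Bloch and ‖f∘φ‖_B ≤ ‖f‖_B. -/

import Mathlib

open Complex Metric Set

/-- The Bergman metric on the unit ball `𝔹_n ⊆ ℂⁿ`:
`H_z(u,ū) = (n+1)[(1-‖z‖²)‖u‖² + |⟨u,z⟩|²] / (2(1-‖z‖²)²)`. -/
noncomputable def bergmanH (n : ℕ) (z u : EuclideanSpace ℂ (Fin n)) : ℝ :=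
  ((n + 1 : ℝ) * ((1 - ‖z‖ ^ 2) * ‖u‖ ^ 2 + ‖(inner ℂ z u : ℂ)‖ ^ 2)) /
    (2 * (1 - ‖z‖ ^ 2) ^ 2)

/-- `Q_f(z) = sup_{u ≠ 0} |f'(z)u| / H_z(u,ū)^{1/2}`. -/
noncomputable def Qball (n : ℕ) (f : EuclideanSpace ℂ (Fin n) → ℂ)
    (z : EuclideanSpace ℂ (Fin n)) : ℝ :=
  sSup {r : ℝ | ∃ u : EuclideanSpace ℂ (Fin n), u ≠ 0 ∧
    r = ‖fderiv ℂ f z u‖ / Real.sqrt (bergmanH n z u)}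

/-- The set of values `Q_f(z)` for `z ∈ 𝔹_n`. -/
def blochValuesBall (n : ℕ) (f : EuclideanSpace ℂ (Fin n) → ℂ) : Set ℝ :=
  {r : ℝ | ∃ z ∈ ball (0 : EuclideanSpace ℂ (Fin n)) 1, r = Qball n f z}

/-- The Bloch seminorm `β_f = sup_{z ∈ 𝔹_n} Q_f(z)`. -/
noncomputable def blochSemiBall (n : ℕ) (f : EuclideanSpace ℂ (Fin n) → ℂ) : ℝ :=
  sSup (blochValuesBall n f)

/-- `f` is a Bloch function on `𝔹_n`. -/
def IsBlochBall (n : ℕ) (f : EuclideanSpace ℂ (Fin n) → ℂ) : Prop :=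
  DifferentiableOn ℂ f (ball (0 : EuclideanSpace ℂ (Fin n)) 1) ∧
    BddAbove (blochValuesBall n f)

/-- The Bloch norm `‖f‖_B = |f(0)| + β_f`. -/
noncomputable def blochNormBall (n : ℕ) (f : EuclideanSpace ℂ (Fin n) → ℂ) : ℝ :=
  ‖f 0‖ + blochSemiBall n f

/-- The operator norm of the composition operator `C_φ` on the Bloch space of
`𝔹_n`: `‖C_φ‖ = sup { ‖f∘φ‖_B : f Bloch, ‖f‖_B ≤ 1 }`. -/
noncomputable def compOpNormBall (n : ℕ)
    (φ : EuclideanSpace ℂ (Fin n) → EuclideanSpace ℂ (Fin n)) : ℝ :=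
  sSup {r : ℝ | ∃ f : EuclideanSpace ℂ (Fin n) → ℂ,
    IsBlochBall n f ∧ blochNormBall n f ≤ 1 ∧ r = blochNormBall n (f ∘ φ)}

/-!
Schwarz–Pick for the Bergman metric: for `z` in the ball put `w = φ z`. The map
`Φ = φ_w ∘ φ ∘ φ_z`, with `φ_a` the automorphism of the ball exchanging `0` and `a`, is a
holomorphic self-map of the ball fixing `0`, so `‖Φ'(0)‖ ≤ 1` by the Schwarz lemma. Since
`φ_a'(0) ∘ φ_a'(a) = id` and `‖φ_a'(a) u‖² = H_a(u, ū)` up to the factor `(n + 1) / 2`, this gives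
`H_{φ z}(φ'(z) u) ≤ H_z(u)`. By the chain rule `Q_{f∘φ}(z) ≤ Q_f(φ z)`, hence `β_{f∘φ} ≤ β_f`, and
`φ 0 = 0` gives `‖f ∘ φ‖_B ≤ ‖f‖_B`, with equality for the constant `1`.
-/

open scoped InnerProductSpace

section Mobius

variable {E : Type*} [NormedAddCommGroup E] {a : E}

noncomputable def mobiusScale (a : E) : ℝ := √(1 - ‖a‖ ^ 2)

lemma mobiusScale_nonneg : 0 ≤ mobiusScale a := Real.sqrt_nonneg _

lemma mobiusScale_sq (ha : ‖a‖ ≤ 1) : mobiusScale a ^ 2 = 1 - ‖a‖ ^ 2 :=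
  Real.sq_sqrt (by nlinarith [norm_nonneg a])

lemma one_add_mobiusScale_ne_zero : 1 + (mobiusScale a : ℂ) ≠ 0 := by
  exact_mod_cast (by linarith [mobiusScale_nonneg (a := a)] : 1 + mobiusScale a ≠ 0)

lemma inv_one_add_mobiusScale_mul_norm_sq (ha : ‖a‖ ≤ 1) :
    (1 + (mobiusScale a : ℂ))⁻¹ * (‖a‖ : ℂ) ^ 2 = 1 - mobiusScale a := by
  rw [inv_mul_eq_div, div_eq_iff one_add_mobiusScale_ne_zero]
  have : ‖a‖ ^ 2 = (1 - mobiusScale a) * (1 + mobiusScale a) := by linarith [mobiusScale_sq ha]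
  exact_mod_cast this

variable [InnerProductSpace ℂ E]

/-- `-(P_a + s Q_a)` with `s = √(1 - ‖a‖²)`, `P_a` the orthogonal projection onto `ℂ a` and
`Q_a = 1 - P_a`; the coefficient `(1 + s)⁻¹ = (1 - s) / ‖a‖²` avoids a division by `‖a‖²`. -/
noncomputable def mobiusLin (a : E) : E →L[ℂ] E :=
  -((mobiusScale a : ℂ) • ContinuousLinearMap.id ℂ E +
    (1 + (mobiusScale a : ℂ))⁻¹ • (innerSL ℂ a).smulRight a)

/-- Rudin's involution `φ_a(x) = (a - P_a x - s Q_a x) / (1 - ⟨x, a⟩)` of the unit ball;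
`⟪a, x⟫_ℂ` is conjugate-linear in `a`, so it is the paper's `⟨x, a⟩`. -/
noncomputable def mobius (a x : E) : E := (1 - ⟪a, x⟫_ℂ)⁻¹ • (a + mobiusLin a x)

lemma one_sub_inner_self_eq_ofReal (a : E) : 1 - ⟪a, a⟫_ℂ = ((1 - ‖a‖ ^ 2 : ℝ) : ℂ) := by
  rw [inner_self_eq_norm_sq_to_K]; push_cast; rfl

lemma mobiusLin_apply (a u : E) :
    mobiusLin a u = -((mobiusScale a : ℂ) • u + ((1 + (mobiusScale a : ℂ))⁻¹ * ⟪a, u⟫_ℂ) • a) := by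
  simp [mobiusLin, smul_smul]

lemma inner_mobiusLin (ha : ‖a‖ ≤ 1) (u : E) : ⟪a, mobiusLin a u⟫_ℂ = -⟪a, u⟫_ℂ := by
  rw [mobiusLin_apply, inner_neg_right, inner_add_right, inner_smul_right, inner_smul_right,
    inner_self_eq_norm_sq_to_K]
  linear_combination -⟪a, u⟫_ℂ * inv_one_add_mobiusScale_mul_norm_sq ha

lemma add_mobiusLin_self (ha : ‖a‖ ≤ 1) : a + mobiusLin a a = 0 := by
  rw [mobiusLin_apply, inner_self_eq_norm_sq_to_K]
  match_scalars
  linear_combination -inv_one_add_mobiusScale_mul_norm_sq ha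

lemma mobiusLin_mobiusLin (ha : ‖a‖ ≤ 1) (u : E) :
    mobiusLin a (mobiusLin a u) = (1 - ⟪a, a⟫_ℂ) • u + ⟪a, u⟫_ℂ • a := by
  have hs : (mobiusScale a : ℂ) ^ 2 = 1 - ⟪a, a⟫_ℂ := by
    rw [one_sub_inner_self_eq_ofReal, ← mobiusScale_sq ha]; push_cast; rfl
  have hc := one_add_mobiusScale_ne_zero (a := a)
  rw [mobiusLin_apply (u := mobiusLin a u), inner_mobiusLin ha, mobiusLin_apply]
  match_scalars
  · linear_combination hs
  · field_simp
    ring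

lemma norm_sq_mobiusLin (ha : ‖a‖ ≤ 1) (u : E) :
    ‖mobiusLin a u‖ ^ 2 = (1 - ‖a‖ ^ 2) * ‖u‖ ^ 2 + ‖⟪a, u⟫_ℂ‖ ^ 2 := by
  have hc := one_add_mobiusScale_ne_zero (a := a)
  have hα : ⟪a, u⟫_ℂ * ⟪u, a⟫_ℂ = (‖⟪a, u⟫_ℂ‖ : ℂ) ^ 2 := by
    rw [← inner_conj_symm u a, Complex.mul_conj']
  suffices h : ⟪mobiusLin a u, mobiusLin a u⟫_ℂ =
      (mobiusScale a : ℂ) ^ 2 * (‖u‖ : ℂ) ^ 2 + (‖⟪a, u⟫_ℂ‖ : ℂ) ^ 2 by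
    rw [← mobiusScale_sq ha, ← inner_self_eq_norm_sq (𝕜 := ℂ), h]
    norm_cast
  nth_rewrite 1 [mobiusLin_apply]
  rw [inner_neg_left, inner_add_left, inner_smul_left, inner_smul_left, inner_mobiusLin ha,
    mobiusLin_apply, inner_neg_right, inner_add_right, inner_smul_right, inner_smul_right,
    inner_self_eq_norm_sq_to_K]
  simp only [map_mul, map_inv₀, map_add, map_one, Complex.conj_ofReal, inner_conj_symm]
  field_simp
  linear_combination (1 + (mobiusScale a : ℂ)) * hα

lemma inner_ne_one_of_norm_lt_one {x : E} (ha : ‖a‖ < 1) (hx : ‖x‖ ≤ 1) : ⟪a, x⟫_ℂ ≠ 1 := by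
  intro h
  have := norm_inner_le_norm (𝕜 := ℂ) a x
  rw [h, norm_one] at this
  nlinarith [norm_nonneg a]

lemma norm_sq_one_sub_inner_sub_norm_sq (ha : ‖a‖ ≤ 1) (x : E) :
    ‖1 - ⟪a, x⟫_ℂ‖ ^ 2 - ‖a + mobiusLin a x‖ ^ 2 = (1 - ‖a‖ ^ 2) * (1 - ‖x‖ ^ 2) := by
  have h1 : ‖1 - ⟪a, x⟫_ℂ‖ ^ 2 = 1 - 2 * (⟪a, x⟫_ℂ).re + ‖⟪a, x⟫_ℂ‖ ^ 2 := by
    simpa using norm_sub_sq (𝕜 := ℂ) (1 : ℂ) ⟪a, x⟫_ℂ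
  rw [h1, norm_add_sq (𝕜 := ℂ), inner_mobiusLin ha, norm_sq_mobiusLin ha]
  simp only [Complex.neg_re, RCLike.re_to_complex]
  ring

lemma norm_mobius_lt_one {x : E} (ha : ‖a‖ < 1) (hx : ‖x‖ < 1) : ‖mobius a x‖ < 1 := by
  have hβ : 0 < ‖1 - ⟪a, x⟫_ℂ‖ :=
    norm_pos_iff.2 (sub_ne_zero.2 (inner_ne_one_of_norm_lt_one ha hx.le).symm)
  have key := norm_sq_one_sub_inner_sub_norm_sq ha.le x
  have hpos : 0 < (1 - ‖a‖ ^ 2) * (1 - ‖x‖ ^ 2) := by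
    apply mul_pos <;> nlinarith [norm_nonneg a, norm_nonneg x]
  rw [mobius, norm_smul, norm_inv, inv_mul_lt_one₀ hβ]
  nlinarith [norm_nonneg (a + mobiusLin a x)]

lemma mapsTo_mobius_ball (ha : ‖a‖ < 1) : MapsTo (mobius a) (ball 0 1) (ball 0 1) := by
  intro x hx
  rw [mem_ball_zero_iff] at hx ⊢
  exact norm_mobius_lt_one ha hx

@[simp] lemma mobius_zero (a : E) : mobius a 0 = a := by simp [mobius]

lemma mobius_self (ha : ‖a‖ ≤ 1) : mobius a a = 0 := by
  rw [mobius, add_mobiusLin_self ha, smul_zero]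

lemma hasFDerivAt_mobius {x : E} (hx : ⟪a, x⟫_ℂ ≠ 1) :
    HasFDerivAt (mobius a) ((1 - ⟪a, x⟫_ℂ)⁻¹ • mobiusLin a +
      ((1 - ⟪a, x⟫_ℂ) ^ 2)⁻¹ • (innerSL ℂ a).smulRight (a + mobiusLin a x)) x := by
  have hden := (hasDerivAt_inv (sub_ne_zero.2 hx.symm)).comp_hasFDerivAt x
    ((innerSL ℂ a).hasFDerivAt.const_sub 1)
  refine (hden.smul ((mobiusLin a).hasFDerivAt.const_add a)).congr_fderiv ?_
  ext
  simp [smul_smul]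

lemma differentiableOn_mobius (ha : ‖a‖ < 1) : DifferentiableOn ℂ (mobius a) (ball 0 1) :=
  fun _ hx ↦ (hasFDerivAt_mobius (inner_ne_one_of_norm_lt_one ha
    (mem_ball_zero_iff.1 hx).le)).differentiableAt.differentiableWithinAt

lemma hasFDerivAt_mobius_self (ha : ‖a‖ < 1) :
    HasFDerivAt (mobius a) ((1 - ⟪a, a⟫_ℂ)⁻¹ • mobiusLin a) a := by
  simpa [add_mobiusLin_self ha.le] using hasFDerivAt_mobius (inner_ne_one_of_norm_lt_one ha ha.le)

lemma hasFDerivAt_mobius_zero :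
    HasFDerivAt (mobius a) (mobiusLin a + (innerSL ℂ a).smulRight a) 0 := by
  simpa using hasFDerivAt_mobius (a := a) (x := 0) (by simp)

lemma fderiv_mobius_zero_comp_fderiv_mobius_self (ha : ‖a‖ < 1) :
    (fderiv ℂ (mobius a) 0).comp (fderiv ℂ (mobius a) a) = ContinuousLinearMap.id ℂ E := by
  have hs : 1 - ⟪a, a⟫_ℂ ≠ 0 := sub_ne_zero.2 (inner_ne_one_of_norm_lt_one ha ha.le).symm
  ext u
  simp only [hasFDerivAt_mobius_zero.fderiv, (hasFDerivAt_mobius_self ha).fderiv,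
    ContinuousLinearMap.comp_apply, add_apply, ContinuousLinearMap.smulRight_apply,
    innerSL_apply_apply, smul_apply, map_smul, mobiusLin_mobiusLin ha.le,
    inner_mobiusLin ha.le, ContinuousLinearMap.id_apply]
  match_scalars
  · field_simp
  · ring

end Mobius

section SchwarzPick

variable {E : Type*} [NormedAddCommGroup E] [InnerProductSpace ℂ E]

noncomputable def bergmanForm (z u : E) : ℝ :=
  ((1 - ‖z‖ ^ 2) * ‖u‖ ^ 2 + ‖⟪z, u⟫_ℂ‖ ^ 2) / (1 - ‖z‖ ^ 2) ^ 2

lemma norm_sq_le_bergmanForm {z : E} (hz : ‖z‖ < 1) (u : E) : ‖u‖ ^ 2 ≤ bergmanForm z u := by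
  have hd : 0 < 1 - ‖z‖ ^ 2 := by nlinarith [norm_nonneg z]
  rw [bergmanForm, le_div_iff₀ (by positivity)]
  nlinarith [sq_nonneg ‖⟪z, u⟫_ℂ‖, sq_nonneg ‖u‖, mul_nonneg (sq_nonneg ‖u‖) (sq_nonneg ‖z‖)]

lemma norm_sq_fderiv_mobius_self_apply {a : E} (ha : ‖a‖ < 1) (u : E) :
    ‖fderiv ℂ (mobius a) a u‖ ^ 2 = bergmanForm a u := by
  rw [(hasFDerivAt_mobius_self ha).fderiv, smul_apply, norm_smul, mul_pow,
    norm_sq_mobiusLin ha.le, one_sub_inner_self_eq_ofReal, norm_inv, Complex.norm_real,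
    Real.norm_eq_abs, inv_pow, sq_abs, bergmanForm, inv_mul_eq_div]

theorem bergmanForm_fderiv_apply_le {φ : E → E} (hmap : MapsTo φ (ball 0 1) (ball 0 1))
    (hφ : DifferentiableOn ℂ φ (ball 0 1)) {z : E} (hz : z ∈ ball 0 1) (u : E) :
    bergmanForm (φ z) (fderiv ℂ φ z u) ≤ bergmanForm z u := by
  set w := φ z
  have hz' : ‖z‖ < 1 := mem_ball_zero_iff.1 hz
  have hw : ‖w‖ < 1 := mem_ball_zero_iff.1 (hmap hz)
  set Φ := mobius w ∘ φ ∘ mobius z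
  have hΦ0 : Φ 0 = 0 := by simp [Φ, mobius_self hw.le, w]
  have hΦmap : MapsTo Φ (ball 0 1) (ball 0 1) :=
    (mapsTo_mobius_ball hw).comp (hmap.comp (mapsTo_mobius_ball hz'))
  have hΦdiff : DifferentiableOn ℂ Φ (ball 0 1) :=
    (differentiableOn_mobius hw).comp (hφ.comp (differentiableOn_mobius hz')
      (mapsTo_mobius_ball hz')) (hmap.comp (mapsTo_mobius_ball hz'))
  have hΦderiv : HasFDerivAt Φ ((fderiv ℂ (mobius w) w).comp
      ((fderiv ℂ φ z).comp (fderiv ℂ (mobius z) 0))) 0 := by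
    have hφz : HasFDerivAt φ (fderiv ℂ φ z) (mobius z 0) := by
      simpa using (hφ.differentiableAt (isOpen_ball.mem_nhds hz)).hasFDerivAt
    have hw' : HasFDerivAt (mobius w) (fderiv ℂ (mobius w) w) (φ (mobius z 0)) := by
      simpa using (hasFDerivAt_mobius_self hw).differentiableAt.hasFDerivAt
    exact hw'.comp 0 (hφz.comp 0 hasFDerivAt_mobius_zero.differentiableAt.hasFDerivAt)
  have hschwarz : ‖fderiv ℂ Φ 0‖ ≤ 1 :=
    Complex.norm_fderiv_le_one_of_mapsTo_ball hΦdiff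
      (by rw [hΦ0]; exact hΦmap.mono_right ball_subset_closedBall) one_pos
  have key := (fderiv ℂ Φ 0).le_of_opNorm_le hschwarz (fderiv ℂ (mobius z) z u)
  rw [hΦderiv.fderiv, one_mul, ContinuousLinearMap.comp_apply, ContinuousLinearMap.comp_apply,
    ← ContinuousLinearMap.comp_apply (fderiv ℂ (mobius z) 0),
    fderiv_mobius_zero_comp_fderiv_mobius_self hz', ContinuousLinearMap.id_apply] at key
  rw [← norm_sq_fderiv_mobius_self_apply hw, ← norm_sq_fderiv_mobius_self_apply hz']
  exact pow_le_pow_left₀ (norm_nonneg _) key 2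

end SchwarzPick

section Bloch

variable {n : ℕ} {z : EuclideanSpace ℂ (Fin n)}

lemma bergmanH_eq_mul_bergmanForm (z u : EuclideanSpace ℂ (Fin n)) :
    bergmanH n z u = (n + 1) / 2 * bergmanForm z u := by
  rw [bergmanH, bergmanForm, div_mul_div_comm]

lemma norm_sq_le_two_mul_bergmanH (hz : ‖z‖ < 1) (u : EuclideanSpace ℂ (Fin n)) :
    ‖u‖ ^ 2 ≤ 2 * bergmanH n z u := by
  have h := norm_sq_le_bergmanForm hz u
  rw [bergmanH_eq_mul_bergmanForm]
  nlinarith [sq_nonneg ‖u‖, n.cast_nonneg (α := ℝ)]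

lemma bergmanH_pos (hz : ‖z‖ < 1) {u : EuclideanSpace ℂ (Fin n)} (hu : u ≠ 0) :
    0 < bergmanH n z u := by
  have := norm_sq_le_two_mul_bergmanH hz u
  have : 0 < ‖u‖ := norm_pos_iff.2 hu
  nlinarith

lemma bergmanH_fderiv_apply_le {φ : EuclideanSpace ℂ (Fin n) → EuclideanSpace ℂ (Fin n)}
    (hmap : MapsTo φ (ball 0 1) (ball 0 1)) (hφ : DifferentiableOn ℂ φ (ball 0 1))
    (hz : z ∈ ball 0 1) (u : EuclideanSpace ℂ (Fin n)) :
    bergmanH n (φ z) (fderiv ℂ φ z u) ≤ bergmanH n z u := by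
  rw [bergmanH_eq_mul_bergmanForm, bergmanH_eq_mul_bergmanForm]
  exact mul_le_mul_of_nonneg_left (bergmanForm_fderiv_apply_le hmap hφ hz u) (by positivity)

lemma Qball_nonneg (f : EuclideanSpace ℂ (Fin n) → ℂ) (z : EuclideanSpace ℂ (Fin n)) :
    0 ≤ Qball n f z :=
  Real.sSup_nonneg (by rintro r ⟨u, -, rfl⟩; positivity)

lemma norm_fderiv_apply_le_Qball_mul (hz : ‖z‖ < 1) (f : EuclideanSpace ℂ (Fin n) → ℂ)
    (u : EuclideanSpace ℂ (Fin n)) : ‖fderiv ℂ f z u‖ ≤ Qball n f z * √(bergmanH n z u) := by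
  rcases eq_or_ne u 0 with rfl | hu
  · simpa using mul_nonneg (Qball_nonneg f z) (Real.sqrt_nonneg _)
  have hbdd : BddAbove {r : ℝ | ∃ v : EuclideanSpace ℂ (Fin n), v ≠ 0 ∧
      r = ‖fderiv ℂ f z v‖ / √(bergmanH n z v)} := by
    refine ⟨‖fderiv ℂ f z‖ * √2, ?_⟩
    rintro r ⟨v, hv, rfl⟩
    have hv2 : ‖v‖ ≤ √(2 * bergmanH n z v) :=
      (Real.le_sqrt' (norm_pos_iff.2 hv)).2 (norm_sq_le_two_mul_bergmanH hz v)
    rw [div_le_iff₀ (Real.sqrt_pos.2 (bergmanH_pos hz hv)), mul_assoc, ← Real.sqrt_mul zero_le_two]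
    exact ((fderiv ℂ f z).le_opNorm v).trans (by gcongr)
  rw [← div_le_iff₀ (Real.sqrt_pos.2 (bergmanH_pos hz hu))]
  exact le_csSup hbdd ⟨u, hu, rfl⟩

variable {φ : EuclideanSpace ℂ (Fin n) → EuclideanSpace ℂ (Fin n)}
  {f : EuclideanSpace ℂ (Fin n) → ℂ}

lemma Qball_comp_le (hmap : MapsTo φ (ball 0 1) (ball 0 1))
    (hφ : DifferentiableOn ℂ φ (ball 0 1)) (hf : DifferentiableOn ℂ f (ball 0 1))
    (hz : z ∈ ball 0 1) : Qball n (f ∘ φ) z ≤ Qball n f (φ z) := by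
  refine Real.sSup_le ?_ (Qball_nonneg f (φ z))
  rintro r ⟨u, hu, rfl⟩
  rw [div_le_iff₀ (Real.sqrt_pos.2 (bergmanH_pos (mem_ball_zero_iff.1 hz) hu)),
    fderiv_comp z (hf.differentiableAt (isOpen_ball.mem_nhds (hmap hz)))
      (hφ.differentiableAt (isOpen_ball.mem_nhds hz)), ContinuousLinearMap.comp_apply]
  calc ‖fderiv ℂ f (φ z) (fderiv ℂ φ z u)‖
      ≤ Qball n f (φ z) * √(bergmanH n (φ z) (fderiv ℂ φ z u)) :=
        norm_fderiv_apply_le_Qball_mul (mem_ball_zero_iff.1 (hmap hz)) f _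
    _ ≤ Qball n f (φ z) * √(bergmanH n z u) := by
        gcongr
        · exact Qball_nonneg f (φ z)
        · exact bergmanH_fderiv_apply_le hmap hφ hz u

lemma blochSemiBall_nonneg (f : EuclideanSpace ℂ (Fin n) → ℂ) : 0 ≤ blochSemiBall n f :=
  Real.sSup_nonneg (by rintro r ⟨z, -, rfl⟩; exact Qball_nonneg f z)

lemma blochSemiBall_mem_upperBounds_comp (hmap : MapsTo φ (ball 0 1) (ball 0 1))
    (hφ : DifferentiableOn ℂ φ (ball 0 1)) (hf : IsBlochBall n f) :
    blochSemiBall n f ∈ upperBounds (blochValuesBall n (f ∘ φ)) := by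
  rintro r ⟨z, hz, rfl⟩
  exact (Qball_comp_le hmap hφ hf.1 hz).trans (le_csSup hf.2 ⟨φ z, hmap hz, rfl⟩)

lemma IsBlochBall.comp (hf : IsBlochBall n f) (hmap : MapsTo φ (ball 0 1) (ball 0 1))
    (hφ : DifferentiableOn ℂ φ (ball 0 1)) : IsBlochBall n (f ∘ φ) :=
  ⟨hf.1.comp hφ hmap, ⟨_, blochSemiBall_mem_upperBounds_comp hmap hφ hf⟩⟩

lemma blochNormBall_comp_le (hmap : MapsTo φ (ball 0 1) (ball 0 1))
    (hφ : DifferentiableOn ℂ φ (ball 0 1)) (h0 : φ 0 = 0) (hf : IsBlochBall n f) :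
    blochNormBall n (f ∘ φ) ≤ blochNormBall n f := by
  rw [blochNormBall, blochNormBall, Function.comp_apply, h0, add_le_add_iff_left]
  exact Real.sSup_le (blochSemiBall_mem_upperBounds_comp hmap hφ hf) (blochSemiBall_nonneg f)

@[simp] lemma Qball_const (c : ℂ) (z : EuclideanSpace ℂ (Fin n)) : Qball n (fun _ ↦ c) z = 0 :=
  le_antisymm (Real.sSup_le (by rintro r ⟨u, -, rfl⟩; simp) le_rfl) (Qball_nonneg _ z)

lemma blochSemiBall_const (c : ℂ) : blochSemiBall n (fun _ ↦ c) = 0 :=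
  le_antisymm (Real.sSup_le (by rintro r ⟨z, -, rfl⟩; simp) le_rfl) (blochSemiBall_nonneg _)

lemma isBlochBall_const (c : ℂ) : IsBlochBall n (fun _ ↦ c) :=
  ⟨differentiableOn_const c, ⟨0, by rintro r ⟨z, -, rfl⟩; simp⟩⟩

lemma blochNormBall_const (c : ℂ) : blochNormBall n (fun _ ↦ c) = ‖c‖ := by
  simp [blochNormBall, blochSemiBall_const]

lemma compOpNormBall_eq_one_of_blochNormBall_comp_le
    (h : ∀ f, IsBlochBall n f → blochNormBall n (f ∘ φ) ≤ blochNormBall n f) :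
    compOpNormBall n φ = 1 := by
  have hub : ∀ r ∈ {r : ℝ | ∃ f : EuclideanSpace ℂ (Fin n) → ℂ,
      IsBlochBall n f ∧ blochNormBall n f ≤ 1 ∧ r = blochNormBall n (f ∘ φ)}, r ≤ 1 := by
    rintro r ⟨f, hf, hf1, rfl⟩
    exact (h f hf).trans hf1
  have hone : blochNormBall n (fun _ ↦ (1 : ℂ)) = 1 := by rw [blochNormBall_const, norm_one]
  exact le_antisymm (Real.sSup_le hub zero_le_one)
    (le_csSup ⟨1, hub⟩ ⟨fun _ ↦ 1, isBlochBall_const 1, hone.le, hone.symm⟩)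

end Bloch

/-- If `φ` is a holomorphic self-map of `𝔹_n` with `φ(0) = 0`, then `‖C_φ‖ = 1`;
in particular `C_φ` is a contraction of the Bloch norm. -/
theorem compOpNorm_eq_one_of_fixes_zero_ball (n : ℕ)
    (φ : EuclideanSpace ℂ (Fin n) → EuclideanSpace ℂ (Fin n))
    (hmap : MapsTo φ (ball (0 : EuclideanSpace ℂ (Fin n)) 1)
      (ball (0 : EuclideanSpace ℂ (Fin n)) 1))
    (hφ : DifferentiableOn ℂ φ (ball (0 : EuclideanSpace ℂ (Fin n)) 1))
    (h0 : φ 0 = 0) :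
    compOpNormBall n φ = 1 ∧
    ∀ f : EuclideanSpace ℂ (Fin n) → ℂ, IsBlochBall n f →
      IsBlochBall n (f ∘ φ) ∧ blochNormBall n (f ∘ φ) ≤ blochNormBall n f :=
  ⟨compOpNormBall_eq_one_of_blochNormBall_comp_le fun _ ↦ blochNormBall_comp_le hmap hφ h0,
    fun _ hf ↦ ⟨hf.comp hmap hφ, blochNormBall_comp_le hmap hφ h0 hf⟩⟩
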